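/- arXiv:1408.4630 — 2 statements merged into one kernel-verified Lean document; each statement's English description precedes it below -/
import Mathlib

section
/- Let L be a full-rank lattice in ℝ^k with fundamental parallelotope of volume 1, and for R > 0 let L(R) = {x ∈ L : ‖x‖ ≤ R, x ≠ 0}. Then ∑_{x ∈ L(R)} ‖x‖² = c₂R^{k+2} + O(R^{k+1}), where c₂ is a constant independent of R and of the lattice L. -/
/-! Translating a fundamental domain `D ⊆ closedBall 0 d` of the lattice by its points `x` with
`‖x‖ ≤ R` tiles a region squeezed between the balls of radii `R - d` and `R + d`. On the tile
`x + D` the function `‖y‖ ^ p` stays within `O(R ^ (p - 1))` of `‖x‖ ^ p`, and there are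
`O(R ^ n)` tiles, so `covol · ∑ ‖x‖ ^ p` is the integral of `‖y‖ ^ p` over the tiles up to
`O(R ^ (n + p - 1))`. The squeeze compares that integral with the integral over the ball of
radius `R`, which is `c R ^ (n + p)` by homogeneity, up to an error of the same order. -/

open Filter Asymptotics MeasureTheory Metric Set Submodule Module Pointwise

lemma abs_norm_pow_sub_norm_pow_le {E : Type*} [SeminormedAddCommGroup E] {x y : E} {R d : ℝ}
    (p : ℕ) (hx : ‖x‖ ≤ R) (hxy : ‖y - x‖ ≤ d) :
    |‖y‖ ^ p - ‖x‖ ^ p| ≤ d * p * (R + d) ^ (p - 1) := by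
  have hy : ‖y‖ ≤ R + d := by linarith [norm_le_norm_sub_add y x]
  have hd : 0 ≤ d := (norm_nonneg _).trans hxy
  refine (abs_pow_sub_pow_le _ _ _).trans ?_
  gcongr
  · exact (abs_norm_sub_norm_le y x).trans hxy
  · simp only [abs_norm]
    exact max_le hy (by linarith)

lemma add_pow_sub_sub_pow_le {R d : ℝ} (hd : 0 ≤ d) (hdR : d ≤ R) (m : ℕ) :
    (R + d) ^ m - (R - d) ^ m ≤ 2 * d * m * (R + d) ^ (m - 1) := by
  refine (le_abs_self _).trans ((abs_pow_sub_pow_le _ _ _).trans_eq ?_)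
  rw [abs_of_nonneg (by linarith : 0 ≤ R + d), abs_of_nonneg (by linarith : 0 ≤ R - d),
    max_eq_left (by linarith), abs_of_nonneg (by linarith)]
  ring

lemma isBigO_add_const_pow (d : ℝ) (j : ℕ) :
    (fun R : ℝ => (R + d) ^ j) =O[atTop] fun R => R ^ j :=
  ((isBigO_refl id atTop).add_isLittleO (isLittleO_const_id_atTop d)).pow j

section

variable {α : Type*} [MeasurableSpace α] {μ : Measure α}

lemma abs_measureReal_mul_sub_setIntegral_le {s : Set α} {f : α → ℝ} {c ε : ℝ} (hs : μ s ≠ ⊤)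
    (hf : IntegrableOn f s μ) (hfc : ∀ y ∈ s, |f y - c| ≤ ε) :
    |μ.real s * c - ∫ y in s, f y ∂μ| ≤ μ.real s * ε := by
  rw [← smul_eq_mul, ← setIntegral_const, ← integral_sub (integrableOn_const hs).integrable hf,
    mul_comm]
  refine norm_setIntegral_le_of_norm_le_const (f := fun y => c - f y) hs.lt_top fun y hy => ?_
  rw [Real.norm_eq_abs, abs_sub_comm]
  exact hfc y hy

lemma abs_setIntegral_sub_setIntegral_le {f : α → ℝ} {s t u v : Set α} (hf : 0 ≤ f)
    (hfv : IntegrableOn f v μ) (hus : u ⊆ s) (hsv : s ⊆ v) (hut : u ⊆ t) (htv : t ⊆ v) :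
    |∫ x in s, f x ∂μ - ∫ x in t, f x ∂μ| ≤ ∫ x in v, f x ∂μ - ∫ x in u, f x ∂μ := by
  have mono : ∀ {a b : Set α}, a ⊆ b → b ⊆ v → ∫ x in a, f x ∂μ ≤ ∫ x in b, f x ∂μ :=
    fun hab hbv => setIntegral_mono_set (hfv.mono_set hbv) (.of_forall hf) hab.eventuallyLE
  rw [abs_le]
  constructor <;> linarith [mono hus hsv, mono hut htv, mono hsv le_rfl, mono htv le_rfl]

end

section

variable {E : Type*} [NormedAddCommGroup E] [NormedSpace ℝ E] [FiniteDimensional ℝ E]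
  [MeasurableSpace E] [BorelSpace E] (μ : Measure E) [μ.IsAddHaarMeasure]

lemma setIntegral_closedBall_norm_pow (p : ℕ) {r : ℝ} (hr : 0 < r) :
    ∫ y in closedBall (0 : E) r, ‖y‖ ^ p ∂μ
      = (∫ y in closedBall (0 : E) 1, ‖y‖ ^ p ∂μ) * r ^ (finrank ℝ E + p) := by
  have h := μ.setIntegral_comp_smul_of_pos (fun y : E => ‖y‖ ^ p) (closedBall 0 1) hr
  rw [_root_.smul_closedBall _ _ zero_le_one, smul_zero, Real.norm_of_nonneg hr.le, mul_one] at h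
  simp only [norm_smul, mul_pow, Real.norm_of_nonneg hr.le, integral_const_mul, smul_eq_mul] at h
  rw [eq_inv_mul_iff_mul_eq₀ (by positivity)] at h
  rw [← h, pow_add]
  ring

end

namespace ZSpan

variable {E ι : Type*} [NormedAddCommGroup E] [NormedSpace ℝ E] (b : Basis ι ℝ E)

lemma norm_sub_le_of_mem_vadd_fundamentalDomain {d : ℝ}
    (hd : ∀ z ∈ fundamentalDomain b, ‖z‖ ≤ d) {x y : E} (hy : y ∈ x +ᵥ fundamentalDomain b) :
    ‖y - x‖ ≤ d := by
  rw [mem_vadd_set_iff_neg_vadd_mem, vadd_eq_add, neg_add_eq_sub] at hy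
  exact hd _ hy

lemma zero_mem_fundamentalDomain : (0 : E) ∈ fundamentalDomain b := by
  simp [mem_fundamentalDomain]

variable [Fintype ι]

lemma pairwiseDisjoint_vadd_fundamentalDomain :
    (span ℤ (range b) : Set E).PairwiseDisjoint (· +ᵥ fundamentalDomain b) := by
  intro v hv w hw hvw
  refine Set.disjoint_left.mpr fun y hyv hyw => hvw ?_
  rw [mem_vadd_set_iff_neg_vadd_mem] at hyv hyw
  have h := (exist_unique_vadd_mem_fundamentalDomain b y).unique
    (y₁ := ⟨-v, neg_mem hv⟩) (y₂ := ⟨-w, neg_mem hw⟩) hyv hyw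
  simpa using h

lemma mem_floor_vadd_fundamentalDomain (y : E) : y ∈ (floor b y : E) +ᵥ fundamentalDomain b :=
  ⟨fract b y, fract_mem_fundamentalDomain b y, by simp [fract_apply]⟩

variable [FiniteDimensional ℝ E]

noncomputable def pointsInClosedBall (R : ℝ) : Finset E :=
  (setFinite_inter b (isBounded_closedBall (x := (0 : E)) (r := R))).toFinset

lemma mem_pointsInClosedBall {R : ℝ} {x : E} :
    x ∈ pointsInClosedBall b R ↔ x ∈ span ℤ (range b) ∧ ‖x‖ ≤ R := by
  simp [pointsInClosedBall, and_comm]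

lemma finsum_mem_norm_pow_eq_sum_pointsInClosedBall {p : ℕ} (hp : p ≠ 0) (R : ℝ) :
    ∑ᶠ x ∈ {x : E | x ∈ span ℤ (range b) ∧ ‖x‖ ≤ R ∧ x ≠ 0}, ‖x‖ ^ p
      = ∑ x ∈ pointsInClosedBall b R, ‖x‖ ^ p := by
  rw [← finsum_mem_coe_finset]
  refine finsum_mem_inter_support_eq' _ _ _ fun x hx => ?_
  have hx0 : x ≠ 0 := by simpa [hp] using hx
  simp [mem_pointsInClosedBall, hx0]

lemma biUnion_pointsInClosedBall_subset {d : ℝ} (hd : ∀ z ∈ fundamentalDomain b, ‖z‖ ≤ d)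
    (R : ℝ) :
    ⋃ x ∈ pointsInClosedBall b R, x +ᵥ fundamentalDomain b ⊆ closedBall 0 (R + d) := by
  simp only [iUnion_subset_iff, mem_pointsInClosedBall]
  intro x ⟨_, hx⟩ y hy
  rw [mem_closedBall_zero_iff]
  linarith [norm_le_norm_sub_add y x, norm_sub_le_of_mem_vadd_fundamentalDomain b hd hy]

lemma closedBall_subset_biUnion_pointsInClosedBall {d : ℝ}
    (hd : ∀ z ∈ fundamentalDomain b, ‖z‖ ≤ d) (R : ℝ) :
    closedBall 0 (R - d) ⊆ ⋃ x ∈ pointsInClosedBall b R, x +ᵥ fundamentalDomain b := by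
  intro y hy
  have hfloor := mem_floor_vadd_fundamentalDomain b y
  rw [mem_closedBall_zero_iff] at hy
  refine mem_biUnion ((mem_pointsInClosedBall b).mpr ⟨(floor b y).2, ?_⟩) hfloor
  linarith [norm_le_norm_sub_add (floor b y : E) y,
    norm_sub_rev (floor b y : E) y, norm_sub_le_of_mem_vadd_fundamentalDomain b hd hfloor]

lemma pairwiseDisjoint_pointsInClosedBall (R : ℝ) :
    (pointsInClosedBall b R : Set E).PairwiseDisjoint (· +ᵥ fundamentalDomain b) :=
  (pairwiseDisjoint_vadd_fundamentalDomain b).subset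
    fun _ hx => ((mem_pointsInClosedBall b).mp hx).1

variable [MeasurableSpace E] [BorelSpace E] (μ : Measure E) [μ.IsAddHaarMeasure]

lemma measure_vadd_fundamentalDomain_ne_top (x : E) : μ (x +ᵥ fundamentalDomain b) ≠ ⊤ := by
  rw [measure_vadd]
  exact (fundamentalDomain_isBounded b).measure_lt_top.ne

lemma measureReal_biUnion_pointsInClosedBall (R : ℝ) :
    μ.real (⋃ x ∈ pointsInClosedBall b R, x +ᵥ fundamentalDomain b)
      = (pointsInClosedBall b R).card * μ.real (fundamentalDomain b) := by
  rw [measureReal_biUnion_finset (pairwiseDisjoint_pointsInClosedBall b R)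
    (fun x _ => (fundamentalDomain_measurableSet b).const_vadd x)
    (fun x _ => measure_vadd_fundamentalDomain_ne_top b μ x)]
  simp [measureReal_def, measure_vadd]

lemma card_pointsInClosedBall_mul_le {d : ℝ} (hd : ∀ z ∈ fundamentalDomain b, ‖z‖ ≤ d)
    (R : ℝ) :
    (pointsInClosedBall b R).card * μ.real (fundamentalDomain b)
      ≤ μ.real (closedBall 0 (R + d)) := by
  rw [← measureReal_biUnion_pointsInClosedBall]
  exact measureReal_mono (biUnion_pointsInClosedBall_subset b hd R) measure_closedBall_lt_top.ne

lemma abs_measureReal_mul_sum_sub_setIntegral_le {d : ℝ}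
    (hd : ∀ z ∈ fundamentalDomain b, ‖z‖ ≤ d) (p : ℕ) (R : ℝ) :
    |μ.real (fundamentalDomain b) * ∑ x ∈ pointsInClosedBall b R, ‖x‖ ^ p
        - ∫ y in ⋃ x ∈ pointsInClosedBall b R, x +ᵥ fundamentalDomain b, ‖y‖ ^ p ∂μ|
      ≤ (pointsInClosedBall b R).card * μ.real (fundamentalDomain b)
        * (d * p * (R + d) ^ (p - 1)) := by
  have hint : ∀ x ∈ pointsInClosedBall b R,
      IntegrableOn (fun y : E => ‖y‖ ^ p) (x +ᵥ fundamentalDomain b) μ := fun x hx =>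
    ((by fun_prop : Continuous fun y : E => ‖y‖ ^ p).continuousOn.integrableOn_compact
      (isCompact_closedBall (0 : E) (R + d))).mono_set
      ((subset_biUnion_of_mem hx).trans (biUnion_pointsInClosedBall_subset b hd R))
  have hcell : ∀ x ∈ pointsInClosedBall b R,
      |μ.real (fundamentalDomain b) * ‖x‖ ^ p - ∫ y in x +ᵥ fundamentalDomain b, ‖y‖ ^ p ∂μ|
        ≤ μ.real (fundamentalDomain b) * (d * p * (R + d) ^ (p - 1)) := by
    intro x hx
    have h := abs_measureReal_mul_sub_setIntegral_le (measure_vadd_fundamentalDomain_ne_top b μ x)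
      (hint x hx) fun y hy => abs_norm_pow_sub_norm_pow_le p ((mem_pointsInClosedBall b).mp hx).2
        (norm_sub_le_of_mem_vadd_fundamentalDomain b hd hy)
    rwa [measureReal_def, measure_vadd, ← measureReal_def] at h
  rw [integral_biUnion_finset _ (fun x _ => (fundamentalDomain_measurableSet b).const_vadd x)
    (pairwiseDisjoint_pointsInClosedBall b R) hint, Finset.mul_sum, ← Finset.sum_sub_distrib]
  calc _ ≤ _ := Finset.abs_sum_le_sum_abs _ _
    _ ≤ _ := Finset.sum_le_sum hcell
    _ = _ := by rw [Finset.sum_const, nsmul_eq_mul, ← mul_assoc]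

lemma abs_measureReal_mul_sum_norm_pow_sub_le {d : ℝ} (hd : ∀ z ∈ fundamentalDomain b, ‖z‖ ≤ d)
    (p : ℕ) {R : ℝ} (hR : d < R) :
    |μ.real (fundamentalDomain b) * ∑ x ∈ pointsInClosedBall b R, ‖x‖ ^ p
        - (∫ y in closedBall (0 : E) 1, ‖y‖ ^ p ∂μ) * R ^ (finrank ℝ E + p)|
      ≤ (R + d) ^ finrank ℝ E * μ.real (closedBall (0 : E) 1) * (d * p * (R + d) ^ (p - 1))
        + (∫ y in closedBall (0 : E) 1, ‖y‖ ^ p ∂μ)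
          * (2 * d * (finrank ℝ E + p : ℕ) * (R + d) ^ (finrank ℝ E + p - 1)) := by
  set I : ℝ → ℝ := fun r => ∫ y in closedBall (0 : E) r, ‖y‖ ^ p ∂μ with hI
  set U := ⋃ x ∈ pointsInClosedBall b R, x +ᵥ fundamentalDomain b
  have hd0 : 0 ≤ d := (norm_nonneg _).trans (hd 0 (zero_mem_fundamentalDomain b))
  have htiles : |μ.real (fundamentalDomain b) * ∑ x ∈ pointsInClosedBall b R, ‖x‖ ^ p
        - ∫ y in U, ‖y‖ ^ p ∂μ|
      ≤ (R + d) ^ finrank ℝ E * μ.real (closedBall (0 : E) 1) * (d * p * (R + d) ^ (p - 1)) := by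
    rw [← μ.addHaar_real_closedBall' 0 (by linarith)]
    exact (abs_measureReal_mul_sum_sub_setIntegral_le b μ hd p R).trans
      (mul_le_mul_of_nonneg_right (card_pointsInClosedBall_mul_le b μ hd R)
        (mul_nonneg (by positivity) (pow_nonneg (by linarith) _)))
  have hsqueeze : |∫ y in U, ‖y‖ ^ p ∂μ - I R| ≤ I (R + d) - I (R - d) :=
    abs_setIntegral_sub_setIntegral_le (fun y => by positivity)
      ((by fun_prop : Continuous fun y : E => ‖y‖ ^ p).continuousOn.integrableOn_compact
        (isCompact_closedBall 0 (R + d)))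
      (closedBall_subset_biUnion_pointsInClosedBall b hd R)
      (biUnion_pointsInClosedBall_subset b hd R)
      (closedBall_subset_closedBall (by linarith)) (closedBall_subset_closedBall (by linarith))
  have hannulus : I (R + d) - I (R - d)
      ≤ I 1 * (2 * d * (finrank ℝ E + p : ℕ) * (R + d) ^ (finrank ℝ E + p - 1)) := by
    simp only [hI, setIntegral_closedBall_norm_pow μ p (by linarith : 0 < R + d),
      setIntegral_closedBall_norm_pow μ p (by linarith : 0 < R - d), ← mul_sub]
    exact mul_le_mul_of_nonneg_left (add_pow_sub_sub_pow_le hd0 hR.le _)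
      (setIntegral_nonneg measurableSet_closedBall fun y _ => by positivity)
  rw [← setIntegral_closedBall_norm_pow μ p (by linarith : 0 < R)]
  calc _ ≤ _ := abs_sub_le _ (∫ y in U, ‖y‖ ^ p ∂μ) _
    _ ≤ _ := by linarith

theorem isBigO_measureReal_mul_sum_norm_pow_sub {p : ℕ} (hp : p ≠ 0) :
    (fun R => μ.real (fundamentalDomain b) * ∑ x ∈ pointsInClosedBall b R, ‖x‖ ^ p
        - (∫ y in closedBall (0 : E) 1, ‖y‖ ^ p ∂μ) * R ^ (finrank ℝ E + p))
      =O[atTop] fun R => R ^ (finrank ℝ E + p - 1) := by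
  obtain ⟨d, hd⟩ := isBounded_iff_forall_norm_le.mp (fundamentalDomain_isBounded b)
  have hexp : finrank ℝ E + p - 1 = finrank ℝ E + (p - 1) := by omega
  have hbound : (fun R => (R + d) ^ finrank ℝ E * μ.real (closedBall (0 : E) 1)
        * (d * p * (R + d) ^ (p - 1)) + (∫ y in closedBall (0 : E) 1, ‖y‖ ^ p ∂μ)
          * (2 * d * (finrank ℝ E + p : ℕ) * (R + d) ^ (finrank ℝ E + p - 1)))
      =O[atTop] fun R => R ^ (finrank ℝ E + p - 1) := by
    refine IsBigO.add ?_ ((isBigO_add_const_pow d _).const_mul_left _ |>.const_mul_left _)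
    rw [hexp]
    simp_rw [pow_add]
    refine (((isBigO_add_const_pow d _).mul
      ((isBigO_add_const_pow d _).const_mul_left (d * p))).const_mul_left
        (μ.real (closedBall (0 : E) 1))).congr_left fun R => ?_
    ring
  refine IsBigO.trans (IsBigO.of_norm_eventuallyLE ?_) hbound
  filter_upwards [eventually_gt_atTop d] with R hR
  exact abs_measureReal_mul_sum_norm_pow_sub_le b μ hd p hR

end ZSpan

lemma ZSpan.volume_real_fundamentalDomain_euclideanSpace {ι : Type*} [Fintype ι] [DecidableEq ι]
    (b : Basis ι ℝ (EuclideanSpace ℝ ι)) :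
    volume.real (fundamentalDomain b) = |(Matrix.of fun i j => b i j).det| := by
  set b₀ := (EuclideanSpace.basisFun ι ℝ).toBasis
  have hunit : volume.real (fundamentalDomain b₀) = 1 := by
    rw [measureReal_congr (fundamentalDomain_ae_parallelepiped b₀ volume), measureReal_def,
      OrthonormalBasis.coe_toBasis, OrthonormalBasis.volume_parallelepiped, ENNReal.toReal_one]
  rw [measureReal_fundamentalDomain b volume b₀, hunit, mul_one, Basis.det_apply,
    ← Matrix.det_transpose]
  rfl

theorem lattice_norm_sq_sum_general (k : ℕ) :
    ∃ c₂ : ℝ, ∀ b : Fin k → EuclideanSpace ℝ (Fin k),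
      LinearIndependent ℝ b →
      |Matrix.det (Matrix.of fun i j => b i j)| = 1 →
      (fun R : ℝ =>
          (∑ᶠ x ∈ {x : EuclideanSpace ℝ (Fin k) |
              x ∈ Submodule.span ℤ (Set.range b) ∧ ‖x‖ ≤ R ∧ x ≠ 0}, ‖x‖ ^ 2)
            - c₂ * R ^ (k + 2))
        =O[atTop] fun R : ℝ => R ^ (k + 1) := by
  refine ⟨∫ y in closedBall (0 : EuclideanSpace ℝ (Fin k)) 1, ‖y‖ ^ 2, fun b hb hdet => ?_⟩
  let B : Basis (Fin k) ℝ (EuclideanSpace ℝ (Fin k)) :=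
    basisOfLinearIndependentOfCardEqFinrank' b hb (by simp)
  have hB : ⇑B = b := coe_basisOfLinearIndependentOfCardEqFinrank' b hb _
  have hcovol : volume.real (ZSpan.fundamentalDomain B) = 1 := by
    rw [ZSpan.volume_real_fundamentalDomain_euclideanSpace, hB, hdet]
  have h := ZSpan.isBigO_measureReal_mul_sum_norm_pow_sub B volume two_ne_zero
  simp only [hcovol, one_mul, finrank_euclideanSpace_fin] at h
  rw [← hB]
  simp only [ZSpan.finsum_mem_norm_pow_eq_sum_pointsInClosedBall B two_ne_zero]
  exact h

/-- For a full-rank lattice `L ⊂ ℝ^k` with fundamental parallelotope of volume 1,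
`∑_{x ∈ L(R)} ‖x‖² = c₂ R^{k+2} + O(R^{k+1})`, where `c₂` is independent of `R` and `L`. -/
theorem lattice_norm_sq_sum (k : ℕ) (hk : 0 < k) :
    ∃ c₂ : ℝ, ∀ b : Fin k → EuclideanSpace ℝ (Fin k),
      LinearIndependent ℝ b →
      |Matrix.det (Matrix.of fun i j => b i j)| = 1 →
      (fun R : ℝ =>
          (∑ᶠ x ∈ {x : EuclideanSpace ℝ (Fin k) |
              x ∈ Submodule.span ℤ (Set.range b) ∧ ‖x‖ ≤ R ∧ x ≠ 0}, ‖x‖ ^ 2)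
            - c₂ * R ^ (k + 2))
        =O[atTop] fun R : ℝ => R ^ (k + 1) :=
  lattice_norm_sq_sum_general k
end

section
/- The function f(x) = (3x^{-3}(sin x − x cos x))², extended by f(0) = 1, satisfies 0 ≤ f(x) ≤ 1 for all x ≥ 0 and f(x) → 0 as x → ∞. -/
/-! Both bounds come from comparing `sin x - x cos x` with `x³/3`: the two functions vanish at `0`
and their derivatives are `x sin x` and `x²`, where `|x sin x| ≤ x²` because `|sin x| ≤ |x|`.
The decay needs only `|sin x - x cos x| ≤ 1 + |x|`, which gives `f(x) = O(x⁻⁴)`. -/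

open Filter

/-- Poitou's test function `f(x) = (3x⁻³(sin x − x cos x))²`, with `f(0) = 1`. -/
noncomputable def poitouF (x : ℝ) : ℝ :=
  if x = 0 then 1 else (3 * x ^ (-3 : ℤ) * (Real.sin x - x * Real.cos x)) ^ 2

open Real

theorem hasDerivAt_sin_sub_mul_cos (x : ℝ) :
    HasDerivAt (fun t ↦ sin t - t * cos t) (x * sin x) x :=
  ((hasDerivAt_sin x).sub ((hasDerivAt_id' x).mul (hasDerivAt_cos x))).congr_deriv (by ring)

theorem abs_sin_sub_mul_cos_le_of_nonneg {x : ℝ} (hx : 0 ≤ x) :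
    |sin x - x * cos x| ≤ x ^ 3 / 3 := by
  refine image_norm_le_of_norm_deriv_right_le_deriv_boundary (a := 0)
    (B := fun t ↦ t ^ 3 / 3) (B' := fun t ↦ t ^ 2) (by fun_prop)
    (fun t _ ↦ (hasDerivAt_sin_sub_mul_cos t).hasDerivWithinAt) (by simp)
    (fun t ↦ by simpa using (hasDerivAt_pow 3 t).div_const 3) (fun t _ ↦ ?_) ⟨hx, le_rfl⟩
  rw [norm_mul, norm_eq_abs, norm_eq_abs, ← sq_abs, sq]
  exact mul_le_mul_of_nonneg_left abs_sin_le_abs (abs_nonneg t)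

theorem abs_sin_sub_mul_cos_le (x : ℝ) : |sin x - x * cos x| ≤ |x| ^ 3 / 3 := by
  rcases le_total 0 x with hx | hx
  · simpa [abs_of_nonneg hx] using abs_sin_sub_mul_cos_le_of_nonneg hx
  · rw [abs_of_nonpos hx, abs_sub_comm]
    simpa [neg_add_eq_sub] using abs_sin_sub_mul_cos_le_of_nonneg (neg_nonneg.2 hx)

theorem abs_sin_sub_mul_cos_le_one_add (x : ℝ) : |sin x - x * cos x| ≤ 1 + |x| :=
  calc |sin x - x * cos x| ≤ |sin x| + |x| * |cos x| := by rw [← abs_mul]; exact abs_sub _ _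
    _ ≤ 1 + |x| * 1 := by gcongr; exacts [abs_sin_le_one x, abs_cos_le_one x]
    _ = 1 + |x| := by ring

theorem poitouF_of_ne_zero {x : ℝ} (hx : x ≠ 0) :
    poitouF x = 9 * (sin x - x * cos x) ^ 2 / x ^ 6 := by
  rw [poitouF, if_neg hx, zpow_neg]
  field_simp
  ring

theorem poitouF_nonneg (x : ℝ) : 0 ≤ poitouF x := by
  unfold poitouF
  split_ifs <;> positivity

theorem poitouF_le_one (x : ℝ) : poitouF x ≤ 1 := by
  rcases eq_or_ne x 0 with rfl | hx
  · simp [poitouF]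
  rw [poitouF_of_ne_zero hx, div_le_one (Even.pow_pos (by decide) hx)]
  calc 9 * (sin x - x * cos x) ^ 2 = (3 * |sin x - x * cos x|) ^ 2 := by
        rw [mul_pow, sq_abs]; norm_num
    _ ≤ (|x| ^ 3) ^ 2 := by gcongr; linarith [abs_sin_sub_mul_cos_le x]
    _ = x ^ 6 := by rw [← pow_mul, pow_mul', sq_abs, ← pow_mul]

theorem poitouF_le_of_one_le {x : ℝ} (hx : 1 ≤ x) : poitouF x ≤ 36 / x ^ 4 := by
  have hx₀ : 0 < x := one_pos.trans_le hx
  rw [poitouF_of_ne_zero hx₀.ne']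
  calc 9 * (sin x - x * cos x) ^ 2 / x ^ 6 ≤ 9 * (2 * x) ^ 2 / x ^ 6 := by
        gcongr 9 * ?_ / _
        rw [sq_le_sq, abs_of_pos (by positivity : 0 < 2 * x)]
        linarith [abs_sin_sub_mul_cos_le_one_add x, abs_of_pos hx₀]
    _ = 36 / x ^ 4 := by field_simp; ring

theorem tendsto_poitouF_atTop : Tendsto poitouF atTop (nhds 0) :=
  squeeze_zero' (.of_forall poitouF_nonneg)
    ((eventually_ge_atTop 1).mono fun _ ↦ poitouF_le_of_one_le)
    (tendsto_const_nhds.div_atTop (tendsto_pow_atTop (by norm_num)))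

/-- `f` satisfies `0 ≤ f(x) ≤ 1` for `x ≥ 0` and `f(x) → 0` as `x → ∞`. -/
theorem poitouF_bounds :
    (∀ x : ℝ, 0 ≤ x → 0 ≤ poitouF x ∧ poitouF x ≤ 1) ∧
      Tendsto poitouF atTop (nhds 0) :=
  ⟨fun x _ ↦ ⟨poitouF_nonneg x, poitouF_le_one x⟩, tendsto_poitouF_atTop⟩
end
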